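/- For even n ≥ 4, the dihedral group D_{2n} has exactly n² + 4n + 4 endomorphisms and exactly n·φ(n) automorphisms. -/

import Mathlib

/-!
A homomorphism out of `D_{2n}` is determined by the images `x`, `y` of `r 1` and `sr 0`, and
every pair with `xⁿ = y² = 1`, `x y = y x⁻¹` occurs. For even `n` the relation `xⁿ = 1` holds for
every element of `D_{2n}`, and sorting `x`, `y` into rotations and reflections the other two
relations leave `2·2 + n·n + n·2 + n·2` pairs, because `c + c = 0` has exactly two solutions in
`ZMod n`. An automorphism sends `r 1` to an element of order `n`, i.e. to `r u` with `u` a unit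
(when `n > 2`), and `sr 0` to a reflection `sr b`, since a rotation would commute with `r u`;
each of these `φ(n) · n` pairs gives the automorphism `r i ↦ r (u i)`, `sr i ↦ sr (b + u i)`.
-/

open DihedralGroup

theorem pow_mul_eq_mul_inv_pow {G : Type*} [Group G] {x y : G} (hxy : x * y = y * x⁻¹) (m : ℕ) :
    x ^ m * y = y * (x ^ m)⁻¹ := by
  have hconj : SemiconjBy y x⁻¹ x := hxy.symm
  rw [← inv_pow]
  exact (hconj.pow_right m).symm

namespace ZMod

variable {n : ℕ}

theorem pow_val_one {M : Type*} [Monoid M] {x : M} (hx : x ^ n = 1) :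
    x ^ (1 : ZMod n).val = x := by
  rw [val_one_eq_one_mod, ← pow_eq_pow_mod _ hx, pow_one]

variable [NeZero n]

theorem pow_val_add {M : Type*} [Monoid M] {x : M} (hx : x ^ n = 1) (i j : ZMod n) :
    x ^ (i + j).val = x ^ i.val * x ^ j.val := by
  rw [val_add, ← pow_eq_pow_mod _ hx, pow_add]

theorem pow_val_neg {G : Type*} [Group G] {x : G} (hx : x ^ n = 1) (i : ZMod n) :
    x ^ (-i).val = (x ^ i.val)⁻¹ := by
  rw [eq_inv_iff_mul_eq_one, ← pow_val_add hx, neg_add_cancel, val_zero, pow_zero]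

theorem card_twoTorsion (heven : Even n) : Nat.card {c : ZMod n // c + c = 0} = 2 := by
  obtain ⟨m, rfl⟩ := heven
  have hm : m ≠ 0 := by rintro rfl; exact NeZero.ne 0 rfl
  rw [Nat.card_eq_two_iff]
  refine ⟨⟨0, add_zero 0⟩, ⟨m, by rw [← Nat.cast_add, natCast_self]⟩, ?_, ?_⟩
  · rw [Ne, Subtype.mk.injEq, eq_comm, natCast_eq_zero_iff]
    exact fun h => hm (Nat.eq_zero_of_dvd_of_lt h (by omega))
  · refine Set.eq_univ_of_forall fun ⟨c, hc⟩ => ?_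
    rw [← natCast_zmod_val c, ← Nat.cast_add, natCast_eq_zero_iff] at hc
    obtain ⟨k, hk⟩ := hc
    have hlt := val_lt c
    have hval : c.val = 0 ∨ c.val = m := by
      rcases k with _ | _ | k <;> [left; right; exfalso] <;> nlinarith
    simp only [Set.mem_insert_iff, Set.mem_singleton_iff, Subtype.mk.injEq]
    rcases hval with h | h
    · exact Or.inl ((val_eq_zero c).1 h)
    · exact Or.inr ((natCast_zmod_val c).symm.trans (congrArg _ h))

end ZMod

namespace DihedralGroup

section Lift

variable {G : Type*} [Group G] {n : ℕ}

variable (G n) in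
/-- The presentation `⟨x, y | xⁿ = y² = 1, x y = y x⁻¹⟩`, with `x = r 1` and `y = sr 0`. -/
def relPairs : Set (G × G) := {p | p.1 ^ n = 1 ∧ p.2 * p.2 = 1 ∧ p.1 * p.2 = p.2 * p.1⁻¹}

theorem hom_ext {f g : DihedralGroup n →* G} (hr : f (r 1) = g (r 1))
    (hsr : f (sr 0) = g (sr 0)) : f = g := by
  have hrot (i : ZMod n) : f (r i) = g (r i) := by
    obtain ⟨k, rfl⟩ := ZMod.intCast_surjective i
    rw [← r_one_zpow, map_zpow, map_zpow, hr]
  ext (i | i)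
  · exact hrot i
  · rw [← zero_add i, ← sr_mul_r, map_mul, map_mul, hsr, hrot]

variable [NeZero n]

def lift (p : relPairs G n) : DihedralGroup n →* G :=
  MonoidHom.mk' (fun | r i => p.1.1 ^ i.val | sr i => p.1.2 * p.1.1 ^ i.val) <| by
    obtain ⟨⟨x, y⟩, hx, hy, hxy⟩ := p
    rintro (i | i) (j | j) <;> simp only [r_mul_r, r_mul_sr, sr_mul_r, sr_mul_sr]
    · exact ZMod.pow_val_add hx i j
    · rw [← mul_assoc, pow_mul_eq_mul_inv_pow hxy, mul_assoc, ← ZMod.pow_val_neg hx,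
        ← ZMod.pow_val_add hx, sub_eq_neg_add]
    · rw [ZMod.pow_val_add hx, mul_assoc]
    · rw [← mul_assoc, mul_assoc y _ y, pow_mul_eq_mul_inv_pow hxy, ← mul_assoc, hy, one_mul,
        ← ZMod.pow_val_neg hx, ← ZMod.pow_val_add hx, neg_add_eq_sub]

@[simp] theorem lift_apply_r (p : relPairs G n) (i : ZMod n) : lift p (r i) = p.1.1 ^ i.val :=
  rfl

@[simp] theorem lift_apply_sr (p : relPairs G n) (i : ZMod n) :
    lift p (sr i) = p.1.2 * p.1.1 ^ i.val :=
  rfl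

theorem lift_apply_r_one (p : relPairs G n) : lift p (r 1) = p.1.1 :=
  ZMod.pow_val_one p.2.1

theorem lift_apply_sr_zero (p : relPairs G n) : lift p (sr 0) = p.1.2 := by
  simp

def liftEquiv : relPairs G n ≃ (DihedralGroup n →* G) where
  toFun := lift
  invFun f := ⟨(f (r 1), f (sr 0)), by
    refine ⟨?_, ?_, ?_⟩
    · rw [← map_pow, r_one_pow_n, map_one]
    · rw [← map_mul, sr_mul_self, map_one]
    · rw [← map_inv, ← map_mul, ← map_mul, r_mul_sr, inv_r, sr_mul_r]
      ring_nf⟩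
  left_inv p := Subtype.ext <| Prod.ext (lift_apply_r_one p) (lift_apply_sr_zero p)
  right_inv f := hom_ext (lift_apply_r_one _) (lift_apply_sr_zero _)

end Lift

section Endomorphisms

variable {n : ℕ} {a b : ZMod n}

theorem pow_eq_one_of_even (heven : Even n) (x : DihedralGroup n) : x ^ n = 1 :=
  orderOf_dvd_iff_pow_eq_one.1 <| (Monoid.order_dvd_exponent x).trans <| by
    rw [exponent]
    exact Nat.lcm_dvd dvd_rfl heven.two_dvd

theorem r_r_mem_relPairs (heven : Even n) :
    (r a, r b) ∈ relPairs (DihedralGroup n) n ↔ a + a = 0 ∧ b + b = 0 := by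
  simp only [relPairs, Set.mem_ofPred_eq, pow_eq_one_of_even heven, r_mul_r, inv_r, ← r_zero,
    r.injEq, true_and, add_comm a b, add_right_inj, eq_neg_iff_add_eq_zero, and_comm]

theorem r_sr_mem_relPairs (heven : Even n) : (r a, sr b) ∈ relPairs (DihedralGroup n) n := by
  simp only [relPairs, Set.mem_ofPred_eq, pow_eq_one_of_even heven, sr_mul_self, r_mul_sr,
    sr_mul_r, inv_r, sub_eq_add_neg, and_self]

theorem sr_r_mem_relPairs (heven : Even n) :
    (sr a, r b) ∈ relPairs (DihedralGroup n) n ↔ b + b = 0 := by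
  simp only [relPairs, Set.mem_ofPred_eq, pow_eq_one_of_even heven, r_mul_r, r_mul_sr, sr_mul_r,
    inv_sr, ← r_zero, r.injEq, sr.injEq, true_and, sub_eq_add_neg, add_right_inj,
    eq_neg_iff_add_eq_zero, and_self]

theorem sr_sr_mem_relPairs (heven : Even n) :
    (sr a, sr b) ∈ relPairs (DihedralGroup n) n ↔ (b - a) + (b - a) = 0 := by
  simp only [relPairs, Set.mem_ofPred_eq, pow_eq_one_of_even heven, sr_mul_self, sr_mul_sr,
    inv_sr, r.injEq, true_and, ← neg_sub b a, eq_neg_iff_add_eq_zero]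

abbrev EndParams (n : ℕ) : Type :=
  ({a : ZMod n // a + a = 0} × {b : ZMod n // b + b = 0}) ⊕ (ZMod n × ZMod n) ⊕
    (ZMod n × {b : ZMod n // b + b = 0}) ⊕ (ZMod n × {c : ZMod n // c + c = 0})

def EndParams.pair : EndParams n → DihedralGroup n × DihedralGroup n
  | .inl (a, b) => (r a, r b)
  | .inr (.inl (a, b)) => (r a, sr b)
  | .inr (.inr (.inl (a, b))) => (sr a, r b)
  | .inr (.inr (.inr (a, c))) => (sr a, sr (a + c))

theorem EndParams.pair_injective : Function.Injective (pair (n := n)) := by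
  rintro (⟨a, b⟩ | ⟨a, b⟩ | ⟨a, b⟩ | ⟨a, c⟩) (⟨a', b'⟩ | ⟨a', b'⟩ | ⟨a', b'⟩ | ⟨a', c'⟩) h <;>
    simp only [pair, Prod.mk.injEq, r.injEq, sr.injEq, Sum.inl.injEq, Sum.inr.injEq,
      Subtype.ext_iff, reduceCtorEq, and_false, false_and, and_self] at h ⊢ <;>
    grind

theorem EndParams.range_pair (heven : Even n) :
    Set.range (pair (n := n)) = relPairs (DihedralGroup n) n := by
  ext ⟨x | x, y | y⟩ <;>
    simp [pair, r_r_mem_relPairs heven, r_sr_mem_relPairs heven, sr_r_mem_relPairs heven,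
      sr_sr_mem_relPairs heven, ← eq_sub_iff_add_eq']

variable [NeZero n]

theorem card_relPairs (heven : Even n) :
    Nat.card (relPairs (DihedralGroup n) n) = n ^ 2 + 4 * n + 4 := by
  rw [← EndParams.range_pair heven, Nat.card_range_of_injective EndParams.pair_injective]
  simp only [EndParams, Nat.card_sum, Nat.card_prod, Nat.card_zmod, ZMod.card_twoTorsion heven]
  ring

theorem card_monoidHom_of_even (heven : Even n) :
    Nat.card (DihedralGroup n →* DihedralGroup n) = n ^ 2 + 4 * n + 4 := by
  rw [← Nat.card_congr liftEquiv, card_relPairs heven]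

end Endomorphisms

section Automorphisms

variable {n : ℕ}

theorem commute_r_sr_iff (i j : ZMod n) : Commute (r i) (sr j) ↔ i + i = 0 := by
  rw [Commute, SemiconjBy, r_mul_sr, sr_mul_r, sr.injEq, sub_eq_add_neg, add_right_inj,
    neg_eq_iff_eq_neg, eq_neg_iff_add_eq_zero]

variable [NeZero n]

def affineHom (u b : ZMod n) : DihedralGroup n →* DihedralGroup n :=
  lift ⟨(r u, sr b), by simp [relPairs, r_pow, r_mul_sr, sr_mul_r, inv_r, sub_eq_add_neg]⟩

theorem affineHom_apply_r (u b i : ZMod n) : affineHom u b (r i) = r (u * i) := by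
  rw [affineHom, lift_apply_r, r_pow, ZMod.natCast_zmod_val]

theorem affineHom_apply_sr (u b i : ZMod n) : affineHom u b (sr i) = sr (b + u * i) := by
  rw [affineHom, lift_apply_sr, r_pow, ZMod.natCast_zmod_val, sr_mul_r]

theorem affineHom_injective (u : (ZMod n)ˣ) (b : ZMod n) :
    Function.Injective (affineHom u b) := by
  rintro (i | i) (j | j) h <;> simp_all [affineHom_apply_r, affineHom_apply_sr]

noncomputable def affineAut (u : (ZMod n)ˣ) (b : ZMod n) : MulAut (DihedralGroup n) :=
  MulEquiv.ofBijective (affineHom u b) (Finite.injective_iff_bijective.1 (affineHom_injective u b))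

@[simp] theorem affineAut_apply (u : (ZMod n)ˣ) (b : ZMod n) (g : DihedralGroup n) :
    affineAut u b g = affineHom u b g :=
  rfl

theorem affineAut_injective :
    Function.Injective (fun p : (ZMod n)ˣ × ZMod n => affineAut p.1 p.2) := by
  rintro ⟨u, b⟩ ⟨u', b'⟩ h
  have hr := DFunLike.congr_fun h (r 1)
  have hsr := DFunLike.congr_fun h (sr 0)
  simp only [affineAut_apply, affineHom_apply_r, affineHom_apply_sr, mul_one, mul_zero, add_zero,
    r.injEq, sr.injEq] at hr hsr
  rw [Prod.mk.injEq]
  exact ⟨Units.ext hr, hsr⟩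

theorem exists_eq_affineAut (hn : 2 < n) (e : MulAut (DihedralGroup n)) :
    ∃ u b, e = affineAut u b := by
  have hord := e.orderOf_eq (r 1)
  obtain ⟨a, ha⟩ : ∃ a, e (r 1) = r a := by
    rcases h : e (r 1) with a | a
    · exact ⟨a, rfl⟩
    · rw [h, orderOf_sr, orderOf_r_one] at hord
      omega
  have hunit : IsUnit a := by
    rw [ha, orderOf_r, orderOf_r_one, Nat.div_eq_self, or_iff_right (NeZero.ne n)] at hord
    rw [← ZMod.natCast_zmod_val a, ZMod.isUnit_iff_coprime]
    exact Nat.coprime_comm.1 hord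
  obtain ⟨b, hb⟩ : ∃ b, e (sr 0) = sr b := by
    rcases h : e (sr 0) with b | b
    · have hcomm : Commute (e (r 1)) (e (sr 0)) := by
        rw [ha, h, Commute, SemiconjBy, r_mul_r, r_mul_r, add_comm]
      have htwo := hcomm.map e.symm
      rw [e.symm_apply_apply, e.symm_apply_apply, commute_r_sr_iff] at htwo
      have : Fact (2 < n) := ⟨hn⟩
      exact absurd (neg_eq_of_add_eq_zero_left htwo) ZMod.neg_one_ne_one
    · exact ⟨b, rfl⟩
  refine ⟨hunit.unit, b, MulEquiv.toMonoidHom_injective (hom_ext ?_ ?_)⟩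
  · simp [ha, affineHom_apply_r]
  · simp [hb, affineHom_apply_sr]

theorem card_mulAut (hn : 2 < n) : Nat.card (MulAut (DihedralGroup n)) = n * n.totient := by
  have hbij : Function.Bijective (fun p : (ZMod n)ˣ × ZMod n => affineAut p.1 p.2) :=
    ⟨affineAut_injective, fun e => by
      obtain ⟨u, b, rfl⟩ := exists_eq_affineAut hn e
      exact ⟨(u, b), rfl⟩⟩
  rw [← Nat.card_congr (Equiv.ofBijective _ hbij), Nat.card_prod, Nat.card_zmod,
    Nat.card_eq_fintype_card, ZMod.card_units_eq_totient, mul_comm]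

end Automorphisms

end DihedralGroup

/-- For even `n ≥ 4`, the dihedral group `D_{2n}` has exactly `n² + 4n + 4` endomorphisms
and exactly `n·φ(n)` automorphisms. -/
theorem card_endomorphisms_dihedral_even (n : ℕ) (hn : 4 ≤ n) (heven : Even n) :
    Nat.card (DihedralGroup n →* DihedralGroup n) = n ^ 2 + 4 * n + 4 ∧
    Nat.card (MulAut (DihedralGroup n)) = n * Nat.totient n := by
  have : NeZero n := ⟨by omega⟩
  exact ⟨card_monoidHom_of_even heven, card_mulAut (by omega)⟩
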